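/- arXiv:1809.07313 — 4 statements merged into one kernel-verified Lean document; each statement's English description precedes it below -/
import Mathlib

section
/- For every natural number k, the independence number of the pebble configuration graph C₅[k] of the 5-cycle satisfies α(C₅[k]) ≤ ⌊5(k+2)(k+1)/(2(k+5))⌋. -/
open Finset

/-- A configuration of `k` identical pebbles on the vertex set `V`. -/
def Config (V : Type*) [Fintype V] (k : ℕ) : Type _ :=
  {f : V → ℕ // ∑ v, f v = k}

/-- The pebble configuration graph `G[k]`: two distinct configurations are adjacent
iff there is a transport `m` moving each pebble along an edge of `G` or keeping it in place. -/
def PebbleGraph {V : Type*} [Fintype V] (G : SimpleGraph V) (k : ℕ) :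
    SimpleGraph (Config V k) where
  Adj f g := f ≠ g ∧ ∃ m : V → V → ℕ,
    (∀ u w, m u w ≠ 0 → u = w ∨ G.Adj u w) ∧
    (∀ u, ∑ w, m u w = f.1 u) ∧ (∀ u, ∑ w, m w u = g.1 u)
  symm := ⟨by
    rintro f g ⟨hne, m, h1, h2, h3⟩
    exact ⟨hne.symm, fun u w => m w u,
      fun u w h => (h1 w u h).imp Eq.symm fun h => G.symm.symm _ _ h, h3, h2⟩⟩
  loopless := ⟨fun f h => h.1 rfl⟩

/-- The independence number of a graph: the supremum of sizes of finite sets of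
pairwise non-adjacent vertices. -/
noncomputable def indepNum {W : Type*} (G : SimpleGraph W) : ℕ :=
  sSup {n | ∃ s : Finset W, (↑s : Set W).Pairwise (fun a b => ¬ G.Adj a b) ∧ s.card = n}

/-- The 5-cycle on vertices `Fin 5`, with `u` adjacent to `u + 1` (mod 5). -/
def C5 : SimpleGraph (Fin 5) where
  Adj u w := u ≠ w ∧ (w = u + 1 ∨ u = w + 1)
  symm := ⟨fun _ _ h => ⟨h.1.symm, h.2.symm⟩⟩
  loopless := ⟨fun _ h => h.1 rfl⟩

/- ### Auxiliary material -/

instance : DecidableRel C5.Adj := fun u w =>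
  decidable_of_iff (u ≠ w ∧ (w = u + 1 ∨ u = w + 1)) Iff.rfl

/-- Closed neighborhood of a set of vertices in `C5`. -/
def nbr (S : Finset (Fin 5)) : Finset (Fin 5) :=
  univ.filter fun w => ∃ v ∈ S, v = w ∨ C5.Adj v w

lemma classify : ∀ S : Finset (Fin 5), nbr S ≠ univ →
    S = ∅ ∨ (∃ i, S = {i}) ∨ (∃ i : Fin 5, S = {i, i+1}) := by decide

lemma nbr_singleton : ∀ i : Fin 5, nbr {i} = {i+4, i, i+1} := by decide

lemma nbr_pair : ∀ i : Fin 5, nbr {i, i+1} = {i+4, i, i+1, i+2} := by decide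

lemma sum_univ_rot (f : Fin 5 → ℕ) (v : Fin 5) :
    ∑ u, f u = f v + f (v+1) + f (v+2) + f (v+3) + f (v+4) := by
  fin_cases v <;> simp [Fin.sum_univ_five] <;> ring

/-- The Hall condition for vertex sets: the total supply on `S` is at most the
total demand on the closed neighborhood of `S`. -/
lemma vertex_hall (k : ℕ) (f g : Fin 5 → ℕ) (hf : ∑ v, f v = k) (hg : ∑ v, g v = k)
    (hfg : ∀ i : Fin 5, f i ≤ g (i+4) + g i + g (i+1))
    (hgf : ∀ i : Fin 5, g i ≤ f (i+4) + f i + f (i+1))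
    (S : Finset (Fin 5)) : ∑ v ∈ S, f v ≤ ∑ w ∈ nbr S, g w := by
  by_cases hU : nbr S = univ
  · rw [hU, hg, ← hf]
    exact Finset.sum_le_sum_of_subset (Finset.subset_univ S)
  · rcases classify S hU with rfl | ⟨i, rfl⟩ | ⟨i, rfl⟩
    · simp
    · rw [nbr_singleton i, Finset.sum_singleton]
      rw [Finset.sum_insert (by fin_cases i <;> decide),
          Finset.sum_insert (by fin_cases i <;> decide), Finset.sum_singleton]
      have := hfg i; omega
    · rw [nbr_pair i, Finset.sum_pair (by fin_cases i <;> decide)]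
      rw [Finset.sum_insert (by fin_cases i <;> decide),
          Finset.sum_insert (by fin_cases i <;> decide),
          Finset.sum_pair (by fin_cases i <;> decide)]
      have h1 := hgf (i+3)
      have e1 : i+3+4 = i+2 := by fin_cases i <;> decide
      have e2 : i+3+1 = i+4 := by fin_cases i <;> decide
      rw [e1, e2] at h1
      have hfr := sum_univ_rot f i
      have hgr := sum_univ_rot g i
      omega

lemma fiber_card (h : Fin 5 → ℕ) (T : Finset (Fin 5)) :
    ((univ : Finset (Σ v : Fin 5, Fin (h v))).filter fun b => b.1 ∈ T).card
      = ∑ w ∈ T, h w := by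
  have : ((univ : Finset (Σ v : Fin 5, Fin (h v))).filter fun b => b.1 ∈ T)
      = T.sigma fun _ => univ := by
    ext ⟨v, y⟩; simp
  rw [this, Finset.card_sigma]
  simp

/-- Construction of a transport between two configurations satisfying the Hall
conditions, via Hall's marriage theorem on the blown-up pebbles. -/
lemma exists_transport (k : ℕ) (f g : Fin 5 → ℕ) (hf : ∑ v, f v = k) (hg : ∑ v, g v = k)
    (hfg : ∀ i : Fin 5, f i ≤ g (i+4) + g i + g (i+1))
    (hgf : ∀ i : Fin 5, g i ≤ f (i+4) + f i + f (i+1)) :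
    ∃ m : Fin 5 → Fin 5 → ℕ,
      (∀ u w, m u w ≠ 0 → u = w ∨ C5.Adj u w) ∧
      (∀ u, ∑ w, m u w = f u) ∧ (∀ u, ∑ w, m w u = g u) := by
  classical
  let ι := Σ v : Fin 5, Fin (f v)
  let α := Σ v : Fin 5, Fin (g v)
  let t : ι → Finset α := fun x => univ.filter fun b => x.1 = b.1 ∨ C5.Adj x.1 b.1
  have hall : ∀ s : Finset ι, s.card ≤ (s.biUnion t).card := by
    intro s
    set S := s.image Sigma.fst with hS
    have h1 : s.card ≤ ∑ v ∈ S, f v := by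
      have hsub : s ⊆ S.sigma fun _ => univ := by
        intro x hx
        rw [Finset.mem_sigma]
        exact ⟨Finset.mem_image_of_mem _ hx, Finset.mem_univ _⟩
      calc s.card ≤ (S.sigma fun _ => (univ : Finset (Fin (f _)))).card :=
            Finset.card_le_card hsub
        _ = ∑ v ∈ S, f v := by rw [Finset.card_sigma]; simp
    have h2 : s.biUnion t = univ.filter fun b : α => b.1 ∈ nbr S := by
      ext b
      simp only [Finset.mem_biUnion, Finset.mem_filter, Finset.mem_univ, true_and, t, nbr]
      constructor
      · rintro ⟨x, hx, h⟩
        exact ⟨x.1, Finset.mem_image_of_mem _ hx, h⟩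
      · rintro ⟨v, hv, h⟩
        obtain ⟨x, hx, rfl⟩ := Finset.mem_image.mp hv
        exact ⟨x, hx, h⟩
    rw [h2, fiber_card]
    exact h1.trans (vertex_hall k f g hf hg hfg hgf S)
  obtain ⟨j, hj_inj, hj_mem⟩ := (Finset.all_card_le_biUnion_card_iff_exists_injective t).mp hall
  have hcard : Fintype.card ι = Fintype.card α := by
    simp only [Fintype.card_sigma, Fintype.card_fin, ι, α]
    rw [hf, hg]
  have hbij : Function.Bijective j :=
    (Fintype.bijective_iff_injective_and_card j).mpr ⟨hj_inj, hcard⟩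
  refine ⟨fun u w => ((univ : Finset ι).filter fun x => x.1 = u ∧ (j x).1 = w).card,
    ?_, ?_, ?_⟩
  · intro u w hm
    obtain ⟨x, hx⟩ := (Finset.card_ne_zero.mp hm).exists_mem
    have hmem := hj_mem x
    rw [Finset.mem_filter] at hx hmem
    rw [← hx.2.1, ← hx.2.2]
    exact hmem.2
  · intro u
    have step : ((univ : Finset ι).filter fun x => x.1 = u).card
        = ∑ w, ((univ : Finset ι).filter fun x => x.1 = u ∧ (j x).1 = w).card := by
      rw [Finset.card_eq_sum_card_fiberwise
        (f := fun x => (j x).1) (t := univ) (fun x _ => Finset.mem_univ _)]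
      refine Finset.sum_congr rfl fun w _ => ?_
      rw [Finset.filter_filter]
    rw [← step]
    have := fiber_card f {u}
    simp only [Finset.mem_singleton, Finset.sum_singleton] at this
    exact this
  · intro u
    have step : ((univ : Finset ι).filter fun x => (j x).1 = u).card
        = ∑ w, ((univ : Finset ι).filter fun x => x.1 = w ∧ (j x).1 = u).card := by
      rw [Finset.card_eq_sum_card_fiberwise
        (f := fun x => x.1) (t := univ) (fun x _ => Finset.mem_univ _)]
      refine Finset.sum_congr rfl fun w _ => ?_
      rw [Finset.filter_filter]
      congr 1
      ext x
      simp only [Finset.mem_filter, Finset.mem_univ, true_and]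
      tauto
    rw [← step]
    have hcb : ((univ : Finset ι).filter fun x => (j x).1 = u).card
        = ((univ : Finset α).filter fun b => b.1 = u).card := by
      apply Finset.card_bij (fun x _ => j x)
      · intro x hx
        rw [Finset.mem_filter] at hx ⊢
        exact ⟨Finset.mem_univ _, hx.2⟩
      · intro x₁ h₁ x₂ h₂ h
        exact hj_inj h
      · intro b hb
        obtain ⟨x, rfl⟩ := hbij.2 b
        rw [Finset.mem_filter] at hb
        exact ⟨x, Finset.mem_filter.mpr ⟨Finset.mem_univ _, hb.2⟩, rfl⟩
    rw [hcb]
    have := fiber_card g {u}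
    simp only [Finset.mem_singleton, Finset.sum_singleton] at this
    exact this

/-- Two distinct non-adjacent configurations admit a "separation witness". -/
lemma exists_witness (k : ℕ) (f g : Config (Fin 5) k) (hne : f ≠ g)
    (hna : ¬ (PebbleGraph C5 k).Adj f g) :
    ∃ i : Fin 5, g.1 (i+4) + g.1 i + g.1 (i+1) < f.1 i ∨
      f.1 (i+4) + f.1 i + f.1 (i+1) < g.1 i := by
  by_contra hc
  push_neg at hc
  exact hna ⟨hne,
    exists_transport k f.1 g.1 f.2 g.2 (fun i => (hc i).1) (fun i => (hc i).2)⟩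

lemma keyArith (k : ℕ) (f g : Fin 5 → ℕ) (hf : ∑ v, f v = k) (hg : ∑ v, g v = k) (v : Fin 5)
    (hb : f (v+2) + f (v+3) = g (v+2) + g (v+3))
    (i : Fin 5)
    (hw : g (i+4) + g i + g (i+1) < f i ∨ f (i+4) + f i + f (i+1) < g i) :
    f (v+1) + f v < g (v+1) ∨ g (v+1) + g v < f (v+1) := by
  rw [sum_univ_rot f v] at hf
  rw [sum_univ_rot g v] at hg
  have hi : i = v + (i - v) := by rw [add_comm, sub_add_cancel]
  have hd : i - v = 0 ∨ i - v = 1 ∨ i - v = 2 ∨ i - v = 3 ∨ i - v = 4 := by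
    generalize i - v = d
    fin_cases d <;> decide
  rw [hi] at hw
  rcases hd with h | h | h | h | h <;> rw [h] at hw <;>
    simp only [add_zero, add_assoc, Fin.reduceAdd] at hw <;> omega

/-- The per-vertex counting bound for independent sets. -/
lemma sum_vertex (k : ℕ) (s : Finset (Config (Fin 5) k))
    (hind : (↑s : Set (Config (Fin 5) k)).Pairwise fun a b => ¬ (PebbleGraph C5 k).Adj a b)
    (v : Fin 5) :
    2 * ∑ f ∈ s, (f.1 v + 1) ≤ (k + 2) * (k + 1) := by
  classical
  set T : Config (Fin 5) k → Finset (Σ _ : ℕ, ℕ) := fun f =>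
    (range (f.1 v + 1)).image fun x =>
      ⟨k + 1 - (f.1 (v+2) + f.1 (v+3)), f.1 (v+1) + x⟩ with hT
  have hboundf : ∀ f : Config (Fin 5) k,
      f.1 v + f.1 (v+1) + (f.1 (v+2) + f.1 (v+3)) ≤ k := by
    intro f
    have h := sum_univ_rot f.1 v
    rw [f.2] at h
    omega
  have hTcard : ∀ f : Config (Fin 5) k, (T f).card = f.1 v + 1 := by
    intro f
    rw [hT]
    rw [Finset.card_image_of_injective _ ?_, Finset.card_range]
    intro a b hab
    simp only [Sigma.mk.inj_iff, heq_eq_eq, true_and] at hab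
    omega
  have hTsub : ∀ f : Config (Fin 5) k, T f ⊆ (range (k+2)).sigma fun b => range b := by
    intro f a ha
    rw [hT] at ha
    obtain ⟨x, hx, rfl⟩ := Finset.mem_image.mp ha
    rw [Finset.mem_range] at hx
    have hb := hboundf f
    rw [Finset.mem_sigma]
    dsimp only
    rw [Finset.mem_range, Finset.mem_range]
    omega
  have hdisj : ∀ f ∈ s, ∀ g ∈ s, f ≠ g → Disjoint (T f) (T g) := by
    intro f hf g hg hne
    rw [Finset.disjoint_left]
    intro a haf hag
    rw [hT] at haf hag
    obtain ⟨x, hx, rfl⟩ := Finset.mem_image.mp haf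
    obtain ⟨y, hy, hyx⟩ := Finset.mem_image.mp hag
    rw [Finset.mem_range] at hx hy
    simp only [Sigma.mk.inj_iff, heq_eq_eq] at hyx
    obtain ⟨h1, h2⟩ := hyx
    have hbf := hboundf f
    have hbg := hboundf g
    have hPeq : f.1 (v+2) + f.1 (v+3) = g.1 (v+2) + g.1 (v+3) := by omega
    have hna := hind (Finset.mem_coe.mpr hf) (Finset.mem_coe.mpr hg) hne
    obtain ⟨i, hw⟩ := exists_witness k f g hne hna
    have := keyArith k f.1 g.1 f.2 g.2 v hPeq i hw
    omega
  have hsum : ∑ f ∈ s, (f.1 v + 1) ≤ ∑ b ∈ range (k+2), b := by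
    calc ∑ f ∈ s, (f.1 v + 1) = ∑ f ∈ s, (T f).card :=
          Finset.sum_congr rfl fun f _ => (hTcard f).symm
      _ = (s.biUnion T).card := (Finset.card_biUnion hdisj).symm
      _ ≤ ((range (k+2)).sigma fun b => range b).card := by
          apply Finset.card_le_card
          intro a ha
          obtain ⟨f, _, haf⟩ := Finset.mem_biUnion.mp ha
          exact hTsub f haf
      _ = ∑ b ∈ range (k+2), b := by rw [Finset.card_sigma]; simp
  have hgauss := Finset.sum_range_id_mul_two (k+2)
  have h21 : k + 2 - 1 = k + 1 := by omega
  rw [h21] at hgauss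
  calc 2 * ∑ f ∈ s, (f.1 v + 1) ≤ 2 * ∑ b ∈ range (k+2), b := by omega
    _ = (∑ b ∈ range (k+2), b) * 2 := by ring
    _ = (k + 2) * (k + 1) := hgauss

/-- For every natural number `k`, the independence number of the pebble configuration
graph `C₅[k]` of the 5-cycle satisfies `α(C₅[k]) ≤ ⌊5(k+2)(k+1)/(2(k+5))⌋`. -/
theorem alpha_C5_pebble_le (k : ℕ) :
    indepNum (PebbleGraph C5 k) ≤ 5 * (k + 2) * (k + 1) / (2 * (k + 5)) := by
  unfold indepNum
  apply csSup_le
  · exact ⟨0, ∅, by simp, rfl⟩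
  rintro n ⟨s, hpw, rfl⟩
  rw [Nat.le_div_iff_mul_le (by positivity)]
  have h5 : ∀ v : Fin 5, 2 * ∑ f ∈ s, (f.1 v + 1) ≤ (k + 2) * (k + 1) := sum_vertex k s hpw
  have hsumv : ∑ v : Fin 5, (2 * ∑ f ∈ s, (f.1 v + 1)) ≤ 5 * ((k+2)*(k+1)) := by
    calc ∑ v : Fin 5, (2 * ∑ f ∈ s, (f.1 v + 1)) ≤ ∑ _v : Fin 5, (k+2)*(k+1) :=
          Finset.sum_le_sum fun v _ => h5 v
      _ = 5 * ((k+2)*(k+1)) := by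
          rw [Finset.sum_const, Finset.card_univ, Fintype.card_fin, smul_eq_mul]
  have hlhs : ∑ v : Fin 5, (2 * ∑ f ∈ s, (f.1 v + 1)) = s.card * (2 * (k + 5)) := by
    rw [← Finset.mul_sum, Finset.sum_comm]
    have hin : ∀ f ∈ s, (∑ v : Fin 5, (f.1 v + 1)) = k + 5 := by
      intro f _
      rw [Finset.sum_add_distrib, f.2]
      simp
    rw [Finset.sum_congr rfl hin, Finset.sum_const, smul_eq_mul]
    ring
  calc s.card * (2 * (k+5)) = ∑ v : Fin 5, (2 * ∑ f ∈ s, (f.1 v + 1)) := hlhs.symm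
    _ ≤ 5 * ((k+2)*(k+1)) := hsumv
    _ = 5 * (k+2) * (k+1) := by ring
end

section
/- For every finite simple graph G with at least one vertex and every natural number k, the independence number of the pebble configuration graph satisfies α(G[k]) ≥ C(k + α(G) − 1, α(G) − 1), where C(·,·) denotes the binomial coefficient. Indeed, if W ⊆ V is an independent set of G, then the configurations of weight k supported on W form an independent set of G[k] of size C(k + |W| − 1, |W| − 1). -/
open Finset

/-!
Configurations supported on an independent set `W` of `G` cannot move any pebble: a pebble
leaving `u ∈ W` must go to a neighbour of `u`, which lies outside `W` and so receives no pebble.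
Hence they form an independent set of `G[k]`, and restricted to `W` they are the multisets of
size `k` on `W`, counted by stars and bars. Taking `W` a maximum independent set gives the bound.
-/

lemma indepNum_eq_simpleGraph_indepNum {α : Type*} (H : SimpleGraph α) :
    indepNum H = H.indepNum := by
  simp only [indepNum, SimpleGraph.indepNum, SimpleGraph.isNIndepSet_iff,
    SimpleGraph.IsIndepSet]

namespace SimpleGraph

variable {α : Type*} [Finite α] {H : SimpleGraph α}

lemma IsIndepSet.ncard_le_indepNum {s : Set α} (hs : H.IsIndepSet s) :
    s.ncard ≤ H.indepNum := by
  rw [Set.ncard_eq_toFinset_card s]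
  exact IsIndepSet.card_le_indepNum (by simpa using hs)

lemma one_le_indepNum [Nonempty α] : 1 ≤ H.indepNum := by
  have hsingleton : H.IsIndepSet {Classical.arbitrary α} := Set.pairwise_singleton _ _
  simpa using hsingleton.ncard_le_indepNum

end SimpleGraph

lemma Finset.sum_coe_sort_eq_sum_univ {V M : Type*} [Fintype V] [AddCommMonoid M]
    {W : Finset V} {f : V → M} (hf : ∀ v ∉ W, f v = 0) :
    ∑ w : W, f w = ∑ v, f v := by
  rw [Finset.sum_coe_sort W f]
  exact Finset.sum_subset (Finset.subset_univ W) fun v _ hv => hf v hv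

namespace Config

variable {V : Type*} [Fintype V] {k : ℕ}

instance : Finite (Config V k) := by
  classical exact Finite.of_equiv _ (Sym.equivNatSumOfFintype V k)

lemma natCard_eq_choose : Nat.card (Config V k) = (Fintype.card V + k - 1).choose k := by
  classical
  calc Nat.card (Config V k) = Nat.card (Sym V k) :=
        Nat.card_congr (Sym.equivNatSumOfFintype V k).symm
    _ = _ := by rw [Nat.card_eq_fintype_card, Sym.card_sym_eq_choose]

def supportedOn (W : Finset V) (k : ℕ) : Set (Config V k) := {f | ∀ v ∉ W, f.1 v = 0}

noncomputable def supportedOnEquiv (W : Finset V) (k : ℕ) : supportedOn W k ≃ Config W k where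
  toFun f := ⟨fun w => f.1.1 w, (Finset.sum_coe_sort_eq_sum_univ f.2).trans f.1.2⟩
  invFun g := by
    classical
    let ext : V → ℕ := fun v => if h : v ∈ W then g.1 ⟨v, h⟩ else 0
    have hext : ∀ v ∉ W, ext v = 0 := fun v hv => dif_neg hv
    refine ⟨⟨ext, ?_⟩, hext⟩
    rw [← Finset.sum_coe_sort_eq_sum_univ hext, ← g.2]
    exact Finset.sum_congr rfl fun w _ => dif_pos w.2
  left_inv f := by
    apply Subtype.ext; apply Subtype.ext; funext v
    by_cases hv : v ∈ W
    · simp [hv]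
    · simp [hv, f.2 v hv]
  right_inv g := by
    apply Subtype.ext; funext w
    simp [w.2]

lemma ncard_supportedOn {W : Finset V} (hW : W.Nonempty) :
    (supportedOn W k).ncard = (k + W.card - 1).choose (W.card - 1) := by
  rw [← Nat.card_coe_set_eq, Nat.card_congr (supportedOnEquiv W k), natCard_eq_choose, Fintype.card_coe]
  obtain ⟨n, hn⟩ := Nat.exists_eq_add_one.2 hW.card_pos
  rw [hn, show n + 1 + k - 1 = n + k by omega, show k + (n + 1) - 1 = n + k by omega,
    Nat.add_sub_cancel, Nat.choose_symm_add]

end Config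

namespace PebbleGraph

variable {V : Type*} [Fintype V] {G : SimpleGraph V} {k : ℕ} {W : Finset V}

lemma not_adj_of_mem_supportedOn (hW : G.IsIndepSet W) {f g : Config V k}
    (hf : f ∈ Config.supportedOn W k) (hg : g ∈ Config.supportedOn W k) :
    ¬ (PebbleGraph G k).Adj f g := by
  rintro ⟨hne, m, hedge, hout, hin⟩
  have hdiag : ∀ u w, u ≠ w → m u w = 0 := by
    intro u w huw
    by_contra hm
    have hu : u ∈ W := by
      by_contra h
      exact hm (Finset.sum_eq_zero_iff.1 ((hout u).trans (hf u h)) w (Finset.mem_univ w))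
    have hw : w ∈ W := by
      by_contra h
      exact hm (Finset.sum_eq_zero_iff.1 ((hin w).trans (hg w h)) u (Finset.mem_univ u))
    exact hW hu hw huw ((hedge u w hm).resolve_left huw)
  refine hne (Subtype.ext (funext fun u => ?_))
  calc f.1 u = ∑ w, m u w := (hout u).symm
    _ = m u u := Finset.sum_eq_single u (fun w _ hw => hdiag u w (Ne.symm hw)) (by simp)
    _ = ∑ w, m w u := (Finset.sum_eq_single u (fun w _ hw => hdiag w u hw) (by simp)).symm
    _ = g.1 u := hin u

lemma isIndepSet_supportedOn (hW : G.IsIndepSet W) :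
    (PebbleGraph G k).IsIndepSet (Config.supportedOn W k) :=
  fun _ hf _ hg _ => not_adj_of_mem_supportedOn hW hf hg

end PebbleGraph

/-- `α(G[k]) ≥ C(k + α(G) − 1, α(G) − 1)`; indeed, for every nonempty independent set
`W` of `G`, the configurations of weight `k` supported on `W` form an independent set
of `G[k]` of size `C(k + |W| − 1, |W| − 1)`. -/
theorem choose_le_alpha_pebble {V : Type*} [Fintype V] [Nonempty V]
    (G : SimpleGraph V) (k : ℕ) :
    (k + indepNum G - 1).choose (indepNum G - 1) ≤ indepNum (PebbleGraph G k) ∧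
    ∀ W : Finset V, W.Nonempty →
      (↑W : Set V).Pairwise (fun a b => ¬ G.Adj a b) →
      ({f : Config V k | ∀ v ∉ W, f.1 v = 0} : Set (Config V k)).Pairwise
          (fun f g => ¬ (PebbleGraph G k).Adj f g) ∧
        {f : Config V k | ∀ v ∉ W, f.1 v = 0}.ncard =
          (k + W.card - 1).choose (W.card - 1) := by
  refine ⟨?_, fun W hW hind =>
    ⟨PebbleGraph.isIndepSet_supportedOn hind, Config.ncard_supportedOn hW⟩⟩
  obtain ⟨W, hWind, hWcard⟩ := G.exists_isNIndepSet_indepNum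
  have hW : W.Nonempty := Finset.card_pos.1 (hWcard ▸ G.one_le_indepNum)
  rw [indepNum_eq_simpleGraph_indepNum, indepNum_eq_simpleGraph_indepNum, ← hWcard,
    ← Config.ncard_supportedOn hW]
  exact (PebbleGraph.isIndepSet_supportedOn hWind).ncard_le_indepNum
end

section
/- Let C₅ be the 5-cycle with vertices v₁,…,v₅ and edges e_j joining v_j and v_{j+1} (indices mod 5), and let k be a natural number. Two distinct vertex configurations f and g of weight k are adjacent in the pebble configuration graph C₅[k] if and only if there exists an edge configuration ψ of weight k that is adjacent to both f and g. -/
open Finset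

/-- An edge configuration `ψ` (pebbles on the edges `e₀, …, e₄` of the 5-cycle, where
`e_j = {v_j, v_{j+1}}`) is adjacent to a vertex configuration `f` if every pebble of `f`
can be moved to an adjacent edge so as to produce `ψ`. -/
def VEAdj (k : ℕ) (f ψ : Config (Fin 5) k) : Prop :=
  ∃ m : Fin 5 → Fin 5 → ℕ,
    (∀ v e, m v e ≠ 0 → v = e ∨ v = e + 1) ∧
    (∀ v, ∑ e, m v e = f.1 v) ∧
    (∀ e, ∑ v, m v e = ψ.1 e)

/-! A transport between two ℕ-weightings is an ℕ-matrix with the given margins supported on a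
relation. Transports compose along relational composition: fibre by fibre over the middle
type, an ℕ-matrix with prescribed margins of equal total always exists (fill it greedily one
unit at a time), and summing these couplings glues the two transports. Conversely a transport
supported on `R ∘r S` factors through a middle weighting by routing each entry through a
witness. On `C₅`, "equal or adjacent" is exactly "on a common edge", the composite of
vertex–edge incidence with its converse, so adjacency in `C₅[k]` is transport through an edge
configuration. -/

local infixr:80 " ∘r " => Relation.Comp

def Transportable {α β : Type*} [Fintype α] [Fintype β] (R : α → β → Prop)
    (f : α → ℕ) (g : β → ℕ) : Prop :=
  ∃ m : α → β → ℕ,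
    (∀ a b, m a b ≠ 0 → R a b) ∧ (∀ a, ∑ b, m a b = f a) ∧ (∀ b, ∑ a, m a b = g b)

theorem exists_eq_add_single_one {α : Type*} [DecidableEq α] {u : α → ℕ} {a : α} (ha : u a ≠ 0) :
    ∃ u' : α → ℕ, u = u' + Pi.single a 1 := by
  refine ⟨u - Pi.single a 1, funext fun x => ?_⟩
  by_cases hx : x = a
  · subst hx
    simp only [Pi.add_apply, Pi.sub_apply, Pi.single_eq_same]
    omega
  · simp [hx]

namespace Transportable

variable {α β γ : Type*} [Fintype α] [Fintype β] [Fintype γ]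
  {R : α → β → Prop} {S : β → γ → Prop} {f : α → ℕ} {g : β → ℕ} {h : γ → ℕ}

theorem symm (hR : Transportable R f g) : Transportable (flip R) g f := by
  obtain ⟨m, hm, hf, hg⟩ := hR
  exact ⟨fun b a => m a b, fun b a hab => hm a b hab, hg, hf⟩

theorem sum_eq (hR : Transportable R f g) : ∑ a, f a = ∑ b, g b := by
  obtain ⟨m, -, hf, hg⟩ := hR
  simp only [← hf, ← hg]
  exact sum_comm

theorem restrict_support (hR : Transportable R f g) :
    Transportable (fun a b => R a b ∧ f a ≠ 0 ∧ g b ≠ 0) f g := by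
  obtain ⟨m, hm, hf, hg⟩ := hR
  have entry_le_row : ∀ a b, m a b ≤ f a := fun a b =>
    hf a ▸ single_le_sum (fun _ _ => Nat.zero_le _) (mem_univ b)
  have entry_le_col : ∀ a b, m a b ≤ g b := fun a b =>
    hg b ▸ single_le_sum (f := (m · b)) (fun _ _ => Nat.zero_le _) (mem_univ a)
  exact ⟨m, fun a b hab => ⟨hm a b hab,
    ((Nat.pos_of_ne_zero hab).trans_le (entry_le_row a b)).ne',
    ((Nat.pos_of_ne_zero hab).trans_le (entry_le_col a b)).ne'⟩, hf, hg⟩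

theorem add {f' : α → ℕ} {g' : β → ℕ} (hR : Transportable R f g) (hR' : Transportable R f' g') :
    Transportable R (f + f') (g + g') := by
  obtain ⟨m, hm, hf, hg⟩ := hR
  obtain ⟨m', hm', hf', hg'⟩ := hR'
  refine ⟨m + m', fun a b hab => ?_, fun a => ?_, fun b => ?_⟩
  · by_cases h : m a b = 0
    · exact hm' a b (by simpa [h] using hab)
    · exact hm a b h
  · simp only [Pi.add_apply, sum_add_distrib, hf, hf']
  · simp only [Pi.add_apply, sum_add_distrib, hg, hg']

theorem single [DecidableEq α] [DecidableEq β] {a : α} {b : β} (hab : R a b) (n : ℕ) :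
    Transportable R (Pi.single a n) (Pi.single b n) := by
  refine ⟨Pi.single a (Pi.single b n), fun a' b' h => ?_, fun a' => ?_, fun b' => ?_⟩
  · obtain rfl : a' = a := by
      by_contra ha
      simp [ha] at h
    obtain rfl : b' = b := by
      by_contra hb
      simp [hb] at h
    exact hab
  · by_cases ha : a' = a
    · subst ha
      simp
    · simp [ha]
  · rw [← Finset.sum_apply, sum_pi_single']
    simp

theorem of_sum_eq {u : α → ℕ} {v : γ → ℕ} (huv : ∑ a, u a = ∑ c, v c) :
    Transportable (fun _ _ => True) u v := by
  classical
  obtain ⟨n, hn⟩ : ∃ n, ∑ a, u a = n := ⟨_, rfl⟩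
  induction n generalizing u v with
  | zero =>
    refine ⟨0, fun _ _ h => absurd rfl h, fun a => ?_, fun c => ?_⟩
    · simpa using (sum_eq_zero_iff.mp hn a (mem_univ a)).symm
    · simpa using (sum_eq_zero_iff.mp (huv ▸ hn) c (mem_univ c)).symm
  | succ n ih =>
    obtain ⟨a, -, ha⟩ := exists_ne_zero_of_sum_ne_zero (hn.trans_ne n.succ_ne_zero)
    obtain ⟨c, -, hc⟩ :=
      exists_ne_zero_of_sum_ne_zero ((huv.symm.trans hn).trans_ne n.succ_ne_zero)
    obtain ⟨u', rfl⟩ := exists_eq_add_single_one ha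
    obtain ⟨v', rfl⟩ := exists_eq_add_single_one hc
    simp only [Pi.add_apply, sum_add_distrib, sum_pi_single', mem_univ, if_true] at huv hn
    exact (ih (by omega) (by omega)).add (single trivial 1)

theorem comp (hR : Transportable R f g) (hS : Transportable S g h) :
    Transportable (R ∘r S) f h := by
  obtain ⟨m₁, hm₁, hf, hg₁⟩ := hR
  obtain ⟨m₂, hm₂, hg₂, hh⟩ := hS
  have coupling : ∀ b, Transportable (fun a c => True ∧ m₁ a b ≠ 0 ∧ m₂ b c ≠ 0)
      (m₁ · b) (m₂ b ·) := fun b =>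
    (of_sum_eq ((hg₁ b).trans (hg₂ b).symm)).restrict_support
  choose n hn hn₁ hn₂ using coupling
  refine ⟨fun a c => ∑ b, n b a c, fun a c hac => ?_, fun a => ?_, fun c => ?_⟩
  · obtain ⟨b, -, hb⟩ := exists_ne_zero_of_sum_ne_zero hac
    obtain ⟨-, hab, hbc⟩ := hn b a c hb
    exact ⟨b, hm₁ a b hab, hm₂ b c hbc⟩
  · rw [sum_comm]
    simp only [hn₁, hf]
  · rw [sum_comm]
    simp only [hn₂, hh]

theorem exists_of_comp (hRS : Transportable (R ∘r S) f h) :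
    ∃ g, Transportable R f g ∧ Transportable S g h := by
  classical
  obtain ⟨m, hm, hf, hh⟩ := hRS
  have route : ∀ a c, ∃ x : β → ℕ, (∀ b, x b ≠ 0 → R a b ∧ S b c) ∧ ∑ b, x b = m a c := by
    intro a c
    by_cases hac : m a c = 0
    · exact ⟨0, fun b hb => absurd rfl hb, by simp [hac]⟩
    · obtain ⟨b, hab, hbc⟩ := hm a c hac
      refine ⟨Pi.single b (m a c), fun b' hb' => ?_, by simp⟩
      obtain rfl : b' = b := by
        by_contra hne
        simp [hne] at hb'
      exact ⟨hab, hbc⟩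
  choose n hn hsum using route
  refine ⟨fun b => ∑ a, ∑ c, n a c b,
    ⟨fun a b => ∑ c, n a c b, fun a b hab => ?_, fun a => ?_, fun b => rfl⟩,
    ⟨fun b c => ∑ a, n a c b, fun b c hbc => ?_, fun b => sum_comm, fun c => ?_⟩⟩
  · obtain ⟨c, -, hc⟩ := exists_ne_zero_of_sum_ne_zero hab
    exact (hn a c b hc).1
  · rw [sum_comm]
    simp only [hsum, hf]
  · obtain ⟨a, -, ha⟩ := exists_ne_zero_of_sum_ne_zero hbc
    exact (hn a c b ha).2
  · rw [sum_comm]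
    simp only [hsum, hh]

theorem comp_iff : Transportable (R ∘r S) f h ↔ ∃ g, Transportable R f g ∧ Transportable S g h :=
  ⟨exists_of_comp, fun ⟨_, hR, hS⟩ => hR.comp hS⟩

end Transportable

/-- Two distinct vertex configurations `f, g` of weight `k` are adjacent in `C₅[k]`
iff some edge configuration of weight `k` is adjacent to both of them. -/
theorem C5_pebble_adj_iff_exists_edgeConfig (k : ℕ) (f g : Config (Fin 5) k)
    (hne : f ≠ g) :
    (PebbleGraph C5 k).Adj f g ↔ ∃ ψ : Config (Fin 5) k, VEAdj k f ψ ∧ VEAdj k g ψ := by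
  set incident : Fin 5 → Fin 5 → Prop := fun v e => v = e ∨ v = e + 1
  have move_iff_shared_edge : ∀ u w : Fin 5, (u = w ∨ (u ≠ w ∧ (w = u + 1 ∨ u = w + 1))) ↔
      ∃ e, (u = e ∨ u = e + 1) ∧ (w = e ∨ w = e + 1) := by
    decide
  have move_eq_shared_edge :
      (fun u w => u = w ∨ C5.Adj u w) = incident ∘r flip incident :=
    funext₂ fun u w => propext (move_iff_shared_edge u w)
  change (f ≠ g ∧ Transportable (fun u w => u = w ∨ C5.Adj u w) f.1 g.1) ↔
    ∃ ψ : Config (Fin 5) k, Transportable incident f.1 ψ.1 ∧ Transportable incident g.1 ψ.1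
  rw [and_iff_right hne, move_eq_shared_edge, Transportable.comp_iff]
  constructor
  · rintro ⟨ψ, hfψ, hψg⟩
    exact ⟨⟨ψ, hfψ.sum_eq.symm.trans f.2⟩, hfψ, hψg.symm⟩
  · rintro ⟨ψ, hfψ, hgψ⟩
    exact ⟨ψ.1, hfψ, hgψ.symm⟩
end

section
/- Let G be a finite simple graph with vertex set V and let k be a natural number. For a function F : Fin k → V, let c_F : V → ℕ be the configuration c_F(v) = #{i : F(i) = v}. Then for any F, G' : Fin k → V, the configurations c_F and c_{G'} are adjacent in the pebble configuration graph G[k] if and only if c_F ≠ c_{G'} and there exists a permutation σ of Fin k such that for every i, either F(i) = G'(σ(i)) or F(i) is adjacent to G'(σ(i)) in G (i.e., F and G'∘σ are equal or adjacent in the k-fold strong power G^{⊠k}). -/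
open Finset

/-- The configuration counting the fibers of a map `F : Fin k → V`. -/
def toConfig {V : Type*} [Fintype V] [DecidableEq V] {k : ℕ} (F : Fin k → V) :
    Config V k :=
  ⟨fun v => (Finset.univ.filter fun i => F i = v).card, by
    rw [← Finset.card_eq_sum_card_fiberwise fun x _ => Finset.mem_univ (F x)]
    simp⟩

/-!
Read a transport `m` as a set of pebbles, one for each unit of `m u w`, moving from `u` to `w`.
The row and column conditions say that as many pebbles start at `u` as there are indices in
`F⁻¹(u)`, and as many end at `w` as there are indices in `H⁻¹(w)`; matching indices with pebbles
fiber by fiber on both sides yields the permutation. Conversely a permutation `σ` gives the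
transport `m u w = #{i | F i = u ∧ H (σ i) = w}`.
-/

theorem exists_equiv_comp_eq_of_card_filter_eq {α γ β : Type*} [Fintype α] [Fintype γ]
    [DecidableEq β] {f : α → β} {g : γ → β} (h : ∀ b, #{a | f a = b} = #{c | g c = b}) :
    ∃ e : α ≃ γ, ∀ a, g (e a) = f a :=
  ⟨Equiv.ofFiberEquiv fun b => Fintype.equivOfCardEq (by simpa [Fintype.card_subtype] using h b),
    Equiv.ofFiberEquiv_map _⟩

theorem card_filter_comp_equiv {ι κ V : Type*} [Fintype ι] [Fintype κ] [DecidableEq V]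
    (σ : ι ≃ κ) (H : κ → V) (w : V) : #{i | H (σ i) = w} = #{j | H j = w} := by
  simp only [← Fintype.card_subtype]
  exact Fintype.card_congr (σ.subtypeEquiv fun _ => Iff.rfl)

section Transport

variable {ι κ V : Type*} [Fintype ι] [Fintype κ] [Fintype V] [DecidableEq V]

theorem sum_card_filter_and_eq_right (F H : ι → V) (u : V) :
    ∑ w, #{i | F i = u ∧ H i = w} = #{i | F i = u} := by
  rw [card_eq_sum_card_fiberwise (f := H) (t := univ) fun _ _ => mem_univ _]
  simp only [filter_filter]

theorem sum_card_filter_and_eq_left (F H : ι → V) (w : V) :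
    ∑ u, #{i | F i = u ∧ H i = w} = #{i | H i = w} := by
  simp only [and_comm (a := F _ = _)]
  exact sum_card_filter_and_eq_right H F w

theorem card_filter_fst_eq_sum (m : V → V → ℕ) (u : V) :
    #{t : Σ p : V × V, Fin (m p.1 p.2) | t.1.1 = u} = ∑ w, m u w := by
  rw [card_filter, Fintype.sum_sigma, Fintype.sum_prod_type]
  simp [apply_ite Finset.card]

theorem card_filter_snd_eq_sum (m : V → V → ℕ) (w : V) :
    #{t : Σ p : V × V, Fin (m p.1 p.2) | t.1.2 = w} = ∑ u, m u w := by
  rw [card_filter, Fintype.sum_sigma, Fintype.sum_prod_type]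
  simp [apply_ite Finset.card]

theorem exists_equiv_of_transport {R : V → V → Prop} {F : ι → V} {H : κ → V} {m : V → V → ℕ}
    (hm : ∀ u w, m u w ≠ 0 → R u w) (hrow : ∀ u, ∑ w, m u w = #{i | F i = u})
    (hcol : ∀ w, ∑ u, m u w = #{j | H j = w}) :
    ∃ σ : ι ≃ κ, ∀ i, R (F i) (H (σ i)) := by
  obtain ⟨eF, hF⟩ := exists_equiv_comp_eq_of_card_filter_eq
    (g := fun t : Σ p : V × V, Fin (m p.1 p.2) => t.1.1) (f := F)
    fun u => by rw [card_filter_fst_eq_sum, hrow]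
  obtain ⟨eH, hH⟩ := exists_equiv_comp_eq_of_card_filter_eq
    (g := fun t : Σ p : V × V, Fin (m p.1 p.2) => t.1.2) (f := H)
    fun w => by rw [card_filter_snd_eq_sum, hcol]
  refine ⟨eF.trans eH.symm, fun i => ?_⟩
  have hpebble : m (eF i).1.1 (eF i).1.2 ≠ 0 := (eF i).2.pos.ne'
  simpa [← hF i, ← hH] using hm _ _ hpebble

theorem exists_transport_of_equiv {R : V → V → Prop} {F : ι → V} {H : κ → V} (σ : ι ≃ κ)
    (hσ : ∀ i, R (F i) (H (σ i))) :
    ∃ m : V → V → ℕ, (∀ u w, m u w ≠ 0 → R u w) ∧ (∀ u, ∑ w, m u w = #{i | F i = u}) ∧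
      ∀ w, ∑ u, m u w = #{j | H j = w} := by
  refine ⟨fun u w => #{i | F i = u ∧ H (σ i) = w}, fun u w h => ?_,
    sum_card_filter_and_eq_right F (H ∘ σ), fun w => ?_⟩
  · obtain ⟨i, hi⟩ := card_ne_zero.mp h
    obtain ⟨rfl, rfl⟩ := (mem_filter.mp hi).2
    exact hσ i
  · exact (sum_card_filter_and_eq_left F (H ∘ σ) w).trans (card_filter_comp_equiv σ H w)

theorem exists_transport_iff_exists_equiv (R : V → V → Prop) (F : ι → V) (H : κ → V) :
    (∃ m : V → V → ℕ, (∀ u w, m u w ≠ 0 → R u w) ∧ (∀ u, ∑ w, m u w = #{i | F i = u}) ∧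
      ∀ w, ∑ u, m u w = #{j | H j = w}) ↔ ∃ σ : ι ≃ κ, ∀ i, R (F i) (H (σ i)) :=
  ⟨fun ⟨_, hm, hrow, hcol⟩ => exists_equiv_of_transport hm hrow hcol,
    fun ⟨σ, hσ⟩ => exists_transport_of_equiv σ hσ⟩

end Transport

/-- `c_F` and `c_{G'}` are adjacent in `G[k]` iff `c_F ≠ c_{G'}` and some permutation
`σ` of `Fin k` makes `F` and `G' ∘ σ` equal or adjacent in the strong power `G^{⊠k}`. -/
theorem pebble_adj_iff_strongPower {V : Type*} [Fintype V] [DecidableEq V]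
    (G : SimpleGraph V) (k : ℕ) (F G' : Fin k → V) :
    (PebbleGraph G k).Adj (toConfig F) (toConfig G') ↔
      toConfig F ≠ toConfig G' ∧
        ∃ σ : Equiv.Perm (Fin k), ∀ i, F i = G' (σ i) ∨ G.Adj (F i) (G' (σ i)) :=
  and_congr_right fun _ => exists_transport_iff_exists_equiv (fun u w => u = w ∨ G.Adj u w) F G'
end
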